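/- arXiv:2408.00760 — 4 statements merged into one kernel-verified Lean document; each statement's English description precedes it below -/
import Mathlib

section
/- Let H, W be positive integers, S = ZMod H × ZMod W, and let g : S → ℝ be a blur kernel (g ≥ 0 pointwise and ∑_{s∈S} g s = 1). For any a : S → ℝ, the circular blur does not increase the variance: Var(blur g a) ≤ Var(a). -/
open Finset Real

/-- Circular blur of `a` by the kernel `g` on `ZMod H × ZMod W`. -/
noncomputable def segBlur {H W : ℕ} [NeZero H] [NeZero W]
    (g : ZMod H × ZMod W → ℝ) (a : ZMod H × ZMod W → ℝ) : ZMod H × ZMod W → ℝ :=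
  fun p => ∑ s : ZMod H × ZMod W, g s * a (p - s)

/-- Mean of `a` over `ZMod H × ZMod W`. -/
noncomputable def segMean {H W : ℕ} [NeZero H] [NeZero W]
    (a : ZMod H × ZMod W → ℝ) : ℝ :=
  (1 / ((H : ℝ) * (W : ℝ))) * ∑ p : ZMod H × ZMod W, a p

/-- Variance of `a` over `ZMod H × ZMod W`. -/
noncomputable def segVar {H W : ℕ} [NeZero H] [NeZero W]
    (a : ZMod H × ZMod W → ℝ) : ℝ :=
  (1 / ((H : ℝ) * (W : ℝ))) * ∑ p : ZMod H × ZMod W, (a p - segMean a) ^ 2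

/-- a circular blur by a normalized nonnegative kernel does not
increase the variance. -/
theorem segBlur_variance_le {H W : ℕ} [NeZero H] [NeZero W]
    (g : ZMod H × ZMod W → ℝ) (hg0 : ∀ s, 0 ≤ g s)
    (hg1 : ∑ s : ZMod H × ZMod W, g s = 1)
    (a : ZMod H × ZMod W → ℝ) :
    segVar (segBlur g a) ≤ segVar a := by
  classical
  set μ := segMean a with hμ
  have hshift : ∀ (s : ZMod H × ZMod W) (f : ZMod H × ZMod W → ℝ),
      ∑ p : ZMod H × ZMod W, f (p - s) = ∑ p : ZMod H × ZMod W, f p := by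
    intro s f
    exact Fintype.sum_equiv (Equiv.subRight s) _ _ (fun p => rfl)
  have hmean : segMean (segBlur g a) = μ := by
    unfold segMean segBlur
    rw [hμ]
    unfold segMean
    congr 1
    rw [Finset.sum_comm]
    calc ∑ s : ZMod H × ZMod W, ∑ p : ZMod H × ZMod W, g s * a (p - s)
        = ∑ s : ZMod H × ZMod W, g s * ∑ p : ZMod H × ZMod W, a p := by
          refine Finset.sum_congr rfl fun s _ => ?_
          rw [← Finset.mul_sum, hshift s a]
      _ = ∑ p : ZMod H × ZMod W, a p := by rw [← Finset.sum_mul, hg1, one_mul]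
  have hdev : ∀ p, segBlur g a p - μ
      = ∑ s : ZMod H × ZMod W, g s * (a (p - s) - μ) := by
    intro p
    simp only [segBlur, mul_sub, Finset.sum_sub_distrib, ← Finset.sum_mul, hg1, one_mul]
  have key : ∀ p, (segBlur g a p - μ) ^ 2
      ≤ ∑ s : ZMod H × ZMod W, g s * (a (p - s) - μ) ^ 2 := by
    intro p
    rw [hdev p]
    have h := Finset.sum_mul_sq_le_sq_mul_sq Finset.univ
      (fun s => Real.sqrt (g s)) (fun s => Real.sqrt (g s) * (a (p - s) - μ))
    have e1 : ∀ s : ZMod H × ZMod W,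
        Real.sqrt (g s) * (Real.sqrt (g s) * (a (p - s) - μ)) = g s * (a (p - s) - μ) := by
      intro s; rw [← mul_assoc, Real.mul_self_sqrt (hg0 s)]
    have e2 : ∀ s : ZMod H × ZMod W, Real.sqrt (g s) ^ 2 = g s := by
      intro s; exact Real.sq_sqrt (hg0 s)
    have e3 : ∀ s : ZMod H × ZMod W,
        (Real.sqrt (g s) * (a (p - s) - μ)) ^ 2 = g s * (a (p - s) - μ) ^ 2 := by
      intro s; rw [mul_pow, e2]
    simp only [e1, e2, e3] at h
    rw [hg1, one_mul] at h
    exact h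
  have hsum : ∑ p : ZMod H × ZMod W, (segBlur g a p - μ) ^ 2
      ≤ ∑ p : ZMod H × ZMod W, (a p - μ) ^ 2 := by
    calc ∑ p : ZMod H × ZMod W, (segBlur g a p - μ) ^ 2
        ≤ ∑ p : ZMod H × ZMod W, ∑ s : ZMod H × ZMod W, g s * (a (p - s) - μ) ^ 2 :=
          Finset.sum_le_sum fun p _ => key p
      _ = ∑ s : ZMod H × ZMod W, g s * ∑ p : ZMod H × ZMod W, (a (p - s) - μ) ^ 2 := by
          rw [Finset.sum_comm]
          exact Finset.sum_congr rfl fun s _ => (Finset.mul_sum _ _ _).symm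
      _ = ∑ s : ZMod H × ZMod W, g s * ∑ p : ZMod H × ZMod W, (a p - μ) ^ 2 := by
          refine Finset.sum_congr rfl fun s _ => ?_
          rw [hshift s (fun p => (a p - μ) ^ 2)]
      _ = ∑ p : ZMod H × ZMod W, (a p - μ) ^ 2 := by
          rw [← Finset.sum_mul, hg1, one_mul]
  have hN : (0 : ℝ) ≤ 1 / ((H : ℝ) * (W : ℝ)) := by positivity
  unfold segVar
  rw [hmean]
  exact mul_le_mul_of_nonneg_left hsum hN
end

section
/- Let H, W be positive integers, S = ZMod H × ZMod W, and let g : S → ℝ be a blur kernel (g ≥ 0 pointwise and ∑_{s∈S} g s = 1). Let a : S → ℝ, let μ = (1/(H·W)) ∑_{p∈S} a p, and for b : S → ℝ define the second-order Taylor approximation T(b) = ∑_{p∈S} (exp μ + exp μ · (b p − μ) + (1/2) · exp μ · (b p − μ)²) of ∑_{p∈S} exp(b p) around μ. Then T(blur g a) ≤ T(a). -/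
open Finset Real

/-- the second-order Taylor approximation (around the mean `μ` of `a`)
of the sum of exponentials does not increase under a circular blur by a normalized
nonnegative kernel. -/
theorem segBlur_taylor_sum_exp_le {H W : ℕ} [NeZero H] [NeZero W]
    (g : ZMod H × ZMod W → ℝ) (hg0 : ∀ s, 0 ≤ g s)
    (hg1 : ∑ s : ZMod H × ZMod W, g s = 1)
    (a : ZMod H × ZMod W → ℝ) :
    (∑ p : ZMod H × ZMod W,
        (Real.exp (segMean a) + Real.exp (segMean a) * (segBlur g a p - segMean a)
          + (1 / 2) * Real.exp (segMean a) * (segBlur g a p - segMean a) ^ 2))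
      ≤ ∑ p : ZMod H × ZMod W,
        (Real.exp (segMean a) + Real.exp (segMean a) * (a p - segMean a)
          + (1 / 2) * Real.exp (segMean a) * (a p - segMean a) ^ 2) := by
  set μ := segMean a with hμ
  set b : ZMod H × ZMod W → ℝ := fun p => a p - μ with hb
  -- blur of a minus μ equals blur of b
  have hblur : ∀ p, segBlur g a p - μ = ∑ s : ZMod H × ZMod W, g s * b (p - s) := by
    intro p
    simp only [segBlur, hb, mul_sub, Finset.sum_sub_distrib, ← Finset.sum_mul, hg1, one_mul]

  -- sum of a(p-s) over p equals sum of a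
  have hshift : ∀ (f : ZMod H × ZMod W → ℝ) (s : ZMod H × ZMod W),
      ∑ p : ZMod H × ZMod W, f (p - s) = ∑ p : ZMod H × ZMod W, f p := by
    intro f s
    exact Fintype.sum_equiv (Equiv.subRight s) _ _ (fun p => rfl)
  -- linear terms equal
  have hlin : ∑ p : ZMod H × ZMod W, (segBlur g a p - μ)
      = ∑ p : ZMod H × ZMod W, (a p - μ) := by
    have : ∑ p : ZMod H × ZMod W, segBlur g a p = ∑ p : ZMod H × ZMod W, a p := by
      simp only [segBlur]
      rw [Finset.sum_comm]
      calc ∑ s : ZMod H × ZMod W, ∑ p : ZMod H × ZMod W, g s * a (p - s)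
          = ∑ s : ZMod H × ZMod W, g s * ∑ p : ZMod H × ZMod W, a p := by
            refine Finset.sum_congr rfl fun s _ => ?_
            rw [← Finset.mul_sum, hshift a s]
        _ = _ := by rw [← Finset.sum_mul, hg1, one_mul]
    simp [Finset.sum_sub_distrib, this]
  -- quadratic terms: Jensen + shift invariance
  have hquad : ∑ p : ZMod H × ZMod W, (segBlur g a p - μ) ^ 2
      ≤ ∑ p : ZMod H × ZMod W, (a p - μ) ^ 2 := by
    have step1 : ∀ p : ZMod H × ZMod W,
        (∑ s : ZMod H × ZMod W, g s * b (p - s)) ^ 2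
        ≤ ∑ s : ZMod H × ZMod W, g s * b (p - s) ^ 2 := by
      intro p
      have key := Finset.sum_mul_sq_le_sq_mul_sq Finset.univ
        (fun s => Real.sqrt (g s)) (fun s => Real.sqrt (g s) * b (p - s))
      have e1 : ∀ s : ZMod H × ZMod W,
          Real.sqrt (g s) * (Real.sqrt (g s) * b (p - s)) = g s * b (p - s) := by
        intro s
        rw [← mul_assoc, Real.mul_self_sqrt (hg0 s)]
      have e2 : ∀ s : ZMod H × ZMod W, Real.sqrt (g s) ^ 2 = g s := fun s =>
        Real.sq_sqrt (hg0 s)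
      have e3 : ∀ s : ZMod H × ZMod W,
          (Real.sqrt (g s) * b (p - s)) ^ 2 = g s * b (p - s) ^ 2 := by
        intro s
        rw [mul_pow, e2]
      simp only [e1, e2, e3, hg1, one_mul] at key
      exact key
    calc ∑ p : ZMod H × ZMod W, (segBlur g a p - μ) ^ 2
        = ∑ p : ZMod H × ZMod W, (∑ s : ZMod H × ZMod W, g s * b (p - s)) ^ 2 := by
          refine Finset.sum_congr rfl fun p _ => ?_; rw [hblur p]
      _ ≤ ∑ p : ZMod H × ZMod W, ∑ s : ZMod H × ZMod W, g s * b (p - s) ^ 2 :=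
          Finset.sum_le_sum fun p _ => step1 p
      _ = ∑ s : ZMod H × ZMod W, g s * ∑ p : ZMod H × ZMod W, b p ^ 2 := by
          rw [Finset.sum_comm]
          refine Finset.sum_congr rfl fun s _ => ?_
          rw [← Finset.mul_sum, hshift (fun p => b p ^ 2) s]
      _ = ∑ p : ZMod H × ZMod W, (a p - μ) ^ 2 := by
          rw [← Finset.sum_mul, hg1, one_mul]
  have hE : (0:ℝ) ≤ Real.exp μ := (Real.exp_pos μ).le
  simp only [Finset.sum_add_distrib, ← Finset.mul_sum]
  have h2 : (1 / 2 : ℝ) * Real.exp μ * ∑ p : ZMod H × ZMod W, (segBlur g a p - μ) ^ 2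
      ≤ (1 / 2) * Real.exp μ * ∑ p : ZMod H × ZMod W, (a p - μ) ^ 2 := by
    apply mul_le_mul_of_nonneg_left hquad (by positivity)
  rw [hlin]
  linarith [h2]
end

section
/- Let n be a positive integer and let a, ã : Fin n → ℝ satisfy ∑_i ã i = ∑_i a i and ∑_i exp(ã i) ≥ ∑_i exp(a i). Then ∏_i softmax(ã) i ≤ ∏_i softmax(a) i, where softmax(b) i = exp(b i) / ∑_j exp(b j). -/
open Finset Real

/-- if `a'` preserves the total sum of `a` and does not decrease the
sum of exponentials, then the product of its softmax entries does not increase. -/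
theorem prod_softmax_le_of_sum_eq_sum_exp_ge (n : ℕ) (hn : 0 < n)
    (a a' : Fin n → ℝ) (hsum : ∑ i, a' i = ∑ i, a i)
    (hexp : ∑ i, Real.exp (a i) ≤ ∑ i, Real.exp (a' i)) :
    (∏ i, Real.exp (a' i) / ∑ j, Real.exp (a' j))
      ≤ ∏ i, Real.exp (a i) / ∑ j, Real.exp (a j) := by
  have hS : 0 < ∑ j, Real.exp (a j) :=
    Finset.sum_pos (fun i _ => Real.exp_pos _) (by simp [Finset.univ_nonempty_iff, Fin.pos_iff_nonempty.mp hn])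
  have hS' : 0 < ∑ j, Real.exp (a' j) := lt_of_lt_of_le hS hexp
  have key : ∀ (b : Fin n → ℝ), (∏ i, Real.exp (b i) / ∑ j, Real.exp (b j))
      = Real.exp (∑ i, b i) / (∑ j, Real.exp (b j)) ^ n := by
    intro b
    rw [Finset.prod_div_distrib, Real.exp_sum, Finset.prod_const, Finset.card_univ, Fintype.card_fin]
  rw [key, key, hsum]
  apply div_le_div_of_nonneg_left (Real.exp_pos _).le (pow_pos hS n)
  exact pow_le_pow_left₀ hS.le hexp n
end

section
/- Let n be a positive integer, let a, ã : Fin n → ℝ satisfy ∑_i ã i = ∑_i a i and ∑_i exp(ã i) ≥ ∑_i exp(a i), and let b : Fin n → ℝ satisfy 0 ≤ b i < 1 for all i. Then ∏_i (softmax(ã) i · b i) < ∏_i softmax(a) i, where softmax(c) i = exp(c i) / ∑_j exp(c j). -/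
open Finset Real

/-- if `a'` preserves the total sum of `a`, does not decrease the
sum of exponentials, and `0 ≤ b i < 1` for all `i`, then the product
`∏ i, softmax(a') i * b i` is strictly smaller than `∏ i, softmax(a) i`. -/
theorem prod_softmax_mul_lt (n : ℕ) (hn : 0 < n)
    (a a' : Fin n → ℝ) (hsum : ∑ i, a' i = ∑ i, a i)
    (hexp : ∑ i, Real.exp (a i) ≤ ∑ i, Real.exp (a' i))
    (b : Fin n → ℝ) (hb0 : ∀ i, 0 ≤ b i) (hb1 : ∀ i, b i < 1) :
    (∏ i, (Real.exp (a' i) / ∑ j, Real.exp (a' j)) * b i)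
      < ∏ i, Real.exp (a i) / ∑ j, Real.exp (a j) := by
  have hS : 0 < ∑ j, Real.exp (a j) :=
    Finset.sum_pos (fun j _ => Real.exp_pos _) (by simp [Finset.univ_nonempty_iff, Fin.pos_iff_nonempty.mp hn])
  have hS' : 0 < ∑ j, Real.exp (a' j) := lt_of_lt_of_le hS hexp
  have hps : 0 < ∏ i, Real.exp (a i) / ∑ j, Real.exp (a j) :=
    Finset.prod_pos fun i _ => div_pos (Real.exp_pos _) hS
  have hps' : 0 < ∏ i, Real.exp (a' i) / ∑ j, Real.exp (a' j) :=
    Finset.prod_pos fun i _ => div_pos (Real.exp_pos _) hS'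
  have hb : ∏ i, b i < 1 := by
    obtain ⟨i0⟩ := Fin.pos_iff_nonempty.mp hn
    calc ∏ i, b i ≤ b i0 * ∏ i ∈ Finset.univ.erase i0, b i := by
          rw [Finset.mul_prod_erase _ _ (Finset.mem_univ i0)]
      _ ≤ b i0 * 1 := by
          gcongr
          · exact hb0 i0
          · exact Finset.prod_le_one (fun i _ => hb0 i) (fun i _ => (hb1 i).le)
      _ < 1 := by simpa using hb1 i0
  have key : (∏ i, Real.exp (a' i) / ∑ j, Real.exp (a' j))
      ≤ ∏ i, Real.exp (a i) / ∑ j, Real.exp (a j) := by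
    rw [Finset.prod_div_distrib, Finset.prod_div_distrib, Finset.prod_const,
      Finset.prod_const, ← Real.exp_sum, ← Real.exp_sum, hsum]
    simp only [Finset.card_univ, Fintype.card_fin]
    gcongr
  calc (∏ i, (Real.exp (a' i) / ∑ j, Real.exp (a' j)) * b i)
      = (∏ i, Real.exp (a' i) / ∑ j, Real.exp (a' j)) * ∏ i, b i := by
        rw [Finset.prod_mul_distrib]
    _ < (∏ i, Real.exp (a' i) / ∑ j, Real.exp (a' j)) * 1 := by
        gcongr
    _ ≤ ∏ i, Real.exp (a i) / ∑ j, Real.exp (a j) := by simpa using key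
end
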